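/- For every consistent layered automaton A over a finite alphabet Σ, the simple-by-priorities alternating parity automaton ⟦A⟧ is history deterministic: there exist a resolver σ for Eve and a resolver τ for Adam with L(⟦A⟧) = L(⟦A⟧,σ) = L(⟦A⟧,τ) = L(⟦A⟧,σ,τ). -/

import Mathlib

open scoped Classical

noncomputable section

/-! ### Infinite words and the parity condition -/

/-- The minimal value occurring infinitely often in a sequence of priorities;
for (eventually) bounded sequences this is the `liminf`. -/
def minInfOften (pi : ℕ → ℕ) : ℕ := sInf {x : ℕ | ∀ N : ℕ, ∃ n : ℕ, N ≤ n ∧ pi n = x}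

/-- The (min-)parity acceptance condition: the liminf of the priorities is even. -/
def ParityAccept (pi : ℕ → ℕ) : Prop := Even (minInfOften pi)

/-- Prepend a finite word to an infinite word. -/
def prependW {α : Type} (u : List α) (w : ℕ → α) : ℕ → α := fun i =>
  if h : i < u.length then u.get ⟨i, h⟩ else w (i - u.length)

/-- The prefix of length `n` of an infinite word, as a list. -/
def wordPrefix {α : Type} (w : ℕ → α) (n : ℕ) : List α := List.ofFn (fun i : Fin n => w i)

/-- Drop the first `n` letters of an infinite word. -/
def wordDrop {α : Type} (w : ℕ → α) (n : ℕ) : ℕ → α := fun i => w (n + i)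

/-- The periodic infinite word `v^ω` (junk if `v = []`). -/
def perWord {α : Type} [Inhabited α] (v : List α) : ℕ → α := fun i => v.getD (i % v.length) default

/-! ### Layered automata -/

/-- A layered automaton over the alphabet `α` with `d` layers.  The (disjoint) layers
are encoded by the function `layer : Q → [1,d]`; each layer is a deterministic
transition system (partial transition function `δ`, which stays inside the layer);
`μ` sends each state of layer `x+1` to its parent in layer `x` (and is the identity
on layer `1`) and is a morphism of transition systems; layer `1` is complete, carries
the initial state, and all its states are reachable from the initial state. -/
structure Layered (Q α : Type) (d : ℕ) where
  layer : Q → ℕ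
  layer_pos : ∀ q, 1 ≤ layer q
  layer_le : ∀ q, layer q ≤ d
  δ : Q → α → Option Q
  δ_layer : ∀ q a q', δ q a = some q' → layer q' = layer q
  μ : Q → Q
  μ_layer : ∀ q, 1 < layer q → layer (μ q) + 1 = layer q
  μ_id : ∀ q, layer q = 1 → μ q = q
  μ_morph : ∀ q a q', 1 < layer q → δ q a = some q' → δ (μ q) a = some (μ q')
  init : Q
  init_layer : layer init = 1
  complete1 : ∀ q a, layer q = 1 → (δ q a).isSome = true
  reach1 : ∀ q, layer q = 1 →
    Relation.ReflTransGen (fun p p' => layer p = 1 ∧ ∃ a, δ p a = some p') init q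

namespace Layered

variable {Q R α : Type} {d d' : ℕ}

/-- The run of the (deterministic) layer transition systems on a finite word. -/
def runList (A : Layered Q α d) : Q → List α → Option Q
  | q, [] => some q
  | q, a :: u =>
    match A.δ q a with
    | some q' => runList A q' u
    | none => none

/-- `μ̂_x q`: the ancestor of `q` in layer `x` (image under the composed morphisms). -/
def muHat (A : Layered Q α d) (x : ℕ) (q : Q) : Q := (A.μ)^[A.layer q - x] q

/-- A leaf state: a state that is not in the image of any of the morphisms `μ_x`. -/
def IsLeaf (A : Layered Q α d) (q : Q) : Prop := ∀ p, 1 < A.layer p → A.μ p ≠ q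

/-- `layer(q,a)`: the largest layer `x ≤ layer q` in which `δ_x (μ̂_x q) a` is defined. -/
def layerOf (A : Layered Q α d) (q : Q) (a : α) : ℕ :=
  Nat.findGreatest (fun x => (A.δ (A.muHat x q) a).isSome = true) (A.layer q)

/-- A state `p` is an ancestor of `q`. -/
def IsAncestor (A : Layered Q α d) (p q : Q) : Prop :=
  A.layer p ≤ A.layer q ∧ A.muHat (A.layer p) q = p

/-! #### Safe languages and strong acceptance -/

/-- Membership of a finite word in the `x`-safe language of `q`. -/
def SafeFin (A : Layered Q α d) (x : ℕ) (q : Q) (u : List α) : Prop :=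
  (A.runList (A.muHat x q) u).isSome = true

/-- Membership of an infinite word in the `x`-safe language of `q`. -/
def SafeInf (A : Layered Q α d) (x : ℕ) (q : Q) (w : ℕ → α) : Prop :=
  ∀ n : ℕ, A.SafeFin x q (wordPrefix w n)

/-- `w` is strongly accepted by the state `p` (which lies in the even layer `x = layer p`):
`w` is `x`-safe from `p` and no decomposition `w = u·w'` admits a state `p'` of layer `x+1`
with a `u`-run from `p` to the parent of `p'` in `T_x` such that `w'` is `(x+1)`-safe from `p'`. -/
def StronglyAcc (A : Layered Q α d) (p : Q) (w : ℕ → α) : Prop :=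
  Even (A.layer p) ∧ A.SafeInf (A.layer p) p w ∧
  ∀ (n : ℕ) (p' : Q), A.layer p' = A.layer p + 1 →
    A.runList p (wordPrefix w n) = some (A.μ p') →
    ¬ A.SafeInf (A.layer p') p' (wordDrop w n)

/-- `w` is strongly rejected by `p` (lying in an odd layer). -/
def StronglyRej (A : Layered Q α d) (p : Q) (w : ℕ → α) : Prop :=
  Odd (A.layer p) ∧ A.SafeInf (A.layer p) p w ∧
  ∀ (n : ℕ) (p' : Q), A.layer p' = A.layer p + 1 →
    A.runList p (wordPrefix w n) = some (A.μ p') →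
    ¬ A.SafeInf (A.layer p') p' (wordDrop w n)

/-- Consistency: no two states with the same layer-1 ancestor strongly accept
resp. strongly reject a common infinite word. -/
def Consistent (A : Layered Q α d) : Prop :=
  ¬ ∃ (p p' : Q) (w : ℕ → α), A.muHat 1 p = A.muHat 1 p' ∧
      A.StronglyAcc p w ∧ A.StronglyRej p' w

/-- `w` is ultimately safe in layer `x`, for the automaton started in the
layer-1 state `q0`. -/
def UltSafeFrom (A : Layered Q α d) (q0 : Q) (x : ℕ) (w : ℕ → α) : Prop :=
  ∃ (n : ℕ) (p : Q), A.layer p = x ∧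
    A.runList q0 (wordPrefix w n) = some (A.muHat 1 p) ∧
    A.SafeInf x p (wordDrop w n)

/-- Layered acceptance from `q0`: the maximal layer in which `w` is ultimately safe is even. -/
def LayeredAcceptFrom (A : Layered Q α d) (q0 : Q) (w : ℕ → α) : Prop :=
  ∃ x : ℕ, Even x ∧ A.UltSafeFrom q0 x w ∧ ∀ y : ℕ, A.UltSafeFrom q0 y w → y ≤ x

/-- Layered rejection from `q0`: the maximal layer in which `w` is ultimately safe is odd. -/
def LayeredRejectFrom (A : Layered Q α d) (q0 : Q) (w : ℕ → α) : Prop :=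
  ∃ x : ℕ, Odd x ∧ A.UltSafeFrom q0 x w ∧ ∀ y : ℕ, A.UltSafeFrom q0 y w → y ≤ x

/-! #### The semantics automaton `⟦A⟧` (a simple-by-priorities alternating parity automaton) -/

/-- The priority of the letter `a` in the state `q` of `⟦A⟧`. -/
def semPrio (A : Layered Q α d) (q : Q) (a : α) : ℕ := A.layerOf q a

/-- The transitions of `⟦A⟧` (between leaf states): `q —a→ q'` iff, for
`x = layer(q,a)`, we have `δ_x (μ̂_x q) a = μ̂_x q'`; the transition carries priority `x`. -/
def semStep (A : Layered Q α d) (q : Q) (a : α) (q' : Q) : Prop :=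
  A.IsLeaf q' ∧ A.δ (A.muHat (A.layerOf q a) q) a = some (A.muHat (A.layerOf q a) q')

/-- Runs of `⟦A⟧` over the infinite word `w`, starting in `p`. -/
def IsSemRun (A : Layered Q α d) (w : ℕ → α) (p : Q) (ρ : ℕ → Q) : Prop :=
  ρ 0 = p ∧ ∀ i : ℕ, A.semStep (ρ i) (w i) (ρ (i + 1))

/-- The sequence of priorities produced by a run of `⟦A⟧` over `w`. -/
def runPrios (A : Layered Q α d) (w : ℕ → α) (ρ : ℕ → Q) : ℕ → ℕ :=
  fun i => A.semPrio (ρ i) (w i)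

/-- A resolver for Eve in `⟦A⟧`: given the history (the finite run so far, as a list of
(state, letter) pairs), the current state and a letter of odd priority, it picks a successor. -/
def EveResolver (A : Layered Q α d) (σ : List (Q × α) → Q → α → Q) : Prop :=
  ∀ (h : List (Q × α)) (q : Q) (a : α), Odd (A.semPrio q a) → A.semStep q a (σ h q a)

/-- A resolver for Adam in `⟦A⟧` (resolving the even-priority steps). -/
def AdamResolver (A : Layered Q α d) (τ : List (Q × α) → Q → α → Q) : Prop :=
  ∀ (h : List (Q × α)) (q : Q) (a : α), Even (A.semPrio q a) → A.semStep q a (τ h q a)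

/-- A run is consistent with the Eve-resolver `σ`: every odd-priority step follows `σ`. -/
def ConsEve (A : Layered Q α d) (σ : List (Q × α) → Q → α → Q) (w : ℕ → α) (ρ : ℕ → Q) : Prop :=
  ∀ i : ℕ, Odd (A.semPrio (ρ i) (w i)) →
    ρ (i + 1) = σ (List.ofFn fun j : Fin i => (ρ (j : ℕ), w (j : ℕ))) (ρ i) (w i)

/-- A run is consistent with the Adam-resolver `τ`: every even-priority step follows `τ`. -/
def ConsAdam (A : Layered Q α d) (τ : List (Q × α) → Q → α → Q) (w : ℕ → α) (ρ : ℕ → Q) : Prop :=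
  ∀ i : ℕ, Even (A.semPrio (ρ i) (w i)) →
    ρ (i + 1) = τ (List.ofFn fun j : Fin i => (ρ (j : ℕ), w (j : ℕ))) (ρ i) (w i)

/-- Acceptance of `w` by `⟦A⟧` from the (leaf) state `p`: Eve has a winning strategy
in the game `G(⟦A⟧,w)`, i.e. a resolver all of whose consistent runs satisfy parity. -/
def SemAccept (A : Layered Q α d) (p : Q) (w : ℕ → α) : Prop :=
  ∃ σ : List (Q × α) → Q → α → Q, A.EveResolver σ ∧
    ∀ ρ : ℕ → Q, A.IsSemRun w p ρ → A.ConsEve σ w ρ → ParityAccept (A.runPrios w ρ)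

/-- Uniform semantic determinism: leaf states with the same layer-1 ancestor
recognise the same language in `⟦A⟧`. -/
def UnifSD (A : Layered Q α d) : Prop :=
  ∀ p q : Q, A.IsLeaf p → A.IsLeaf q → A.muHat 1 p = A.muHat 1 q →
    ∀ w : ℕ → α, (A.SemAccept p w ↔ A.SemAccept q w)

/-! #### Longest suffix resolvers -/

/-- `v` is a suffix-witness to `r`: the layer of `r` has a run labelled `v` ending in `r`. -/
def suffixReaches (A : Layered Q α d) (r : Q) (v : List α) : Prop :=
  ∃ p : Q, A.layer p = A.layer r ∧ A.runList p v = some r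

/-- The length of the longest suffix `v` of `u` such that the layer of `r` has a
run labelled `v` ending in `r`. -/
def longestSuffixLen (A : Layered Q α d) (u : List α) (r : Q) : ℕ :=
  Nat.findGreatest (fun k => k ≤ u.length ∧ A.suffixReaches r (u.drop (u.length - k))) u.length

/-- A longest suffix resolver for Eve, initialised to `u0`: a valid Eve-resolver that,
at a step of odd priority `x` after having read `v`, moves to an `a`-successor `q'`
maximising the length of the longest `(x+1)`-suffix of `u0·v·a` to `μ̂_{x+1} q'`. -/
def IsLongestSuffixResolverE (A : Layered Q α d) (u0 : List α)
    (σ : List (Q × α) → Q → α → Q) : Prop :=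
  A.EveResolver σ ∧
  ∀ (h : List (Q × α)) (q : Q) (a : α), Odd (A.semPrio q a) →
    ∀ q' : Q, A.semStep q a q' →
      A.longestSuffixLen (u0 ++ h.map Prod.snd ++ [a]) (A.muHat (A.semPrio q a + 1) q') ≤
      A.longestSuffixLen (u0 ++ h.map Prod.snd ++ [a]) (A.muHat (A.semPrio q a + 1) (σ h q a))

/-- A longest suffix resolver for Adam, initialised to `u0` (symmetric, for even priorities). -/
def IsLongestSuffixResolverA (A : Layered Q α d) (u0 : List α)
    (τ : List (Q × α) → Q → α → Q) : Prop :=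
  A.AdamResolver τ ∧
  ∀ (h : List (Q × α)) (q : Q) (a : α), Even (A.semPrio q a) →
    ∀ q' : Q, A.semStep q a q' →
      A.longestSuffixLen (u0 ++ h.map Prod.snd ++ [a]) (A.muHat (A.semPrio q a + 1) q') ≤
      A.longestSuffixLen (u0 ++ h.map Prod.snd ++ [a]) (A.muHat (A.semPrio q a + 1) (τ h q a))

/-! #### The random walk on `⟦A⟧` -/

/-- The uniform step probability of the random walk of `⟦A⟧`. -/
def stepProb (A : Layered Q α d) (q : Q) (a : α) (q' : Q) : ENNReal :=
  if A.semStep q a q' then ((Nat.card {p : Q // A.semStep q a p} : ENNReal))⁻¹ else 0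

/-- `m` is the Markov measure of the random walk of `⟦A⟧` over the word `w` started at `p`:
a probability measure on `ℕ → Q` whose cylinder probabilities are the products of the
uniform step probabilities. -/
def IsWalkMeasure [MeasurableSpace Q] (A : Layered Q α d) (w : ℕ → α) (p : Q)
    (m : MeasureTheory.Measure (ℕ → Q)) : Prop :=
  MeasureTheory.IsProbabilityMeasure m ∧
  ∀ (n : ℕ) (s : Fin (n + 1) → Q),
    m {ρ : ℕ → Q | ∀ i : Fin (n + 1), ρ (i : ℕ) = s i} =
      (if s 0 = p then 1 else 0) *
        ∏ i : Fin n, A.stepProb (s i.castSucc) (w (i : ℕ)) (s i.succ)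

/-! #### Normal form, centrality, safe minimality, central sequences -/

/-- Normal form: (N1) every layer `x ≥ 2` is a union of non-trivial SCCs, and
(N2) the safe language of every child is strictly smaller than that of its parent. -/
def NormalForm (A : Layered Q α d) : Prop :=
  ∀ q : Q, 2 ≤ A.layer q →
    (∀ (u : List α) (q' : Q), A.runList q u = some q' →
      ∃ v : List α, v ≠ [] ∧ A.runList q' v = some q) ∧
    (∀ p : Q, 1 < A.layer p → A.μ p = q →
      ∃ u : List α, (A.runList q u).isSome = true ∧ A.runList p u = none)

/-- Inclusion of `x`-safe languages. -/
def SafeLE (A : Layered Q α d) (x : ℕ) (p q : Q) : Prop :=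
  (∀ u : List α, A.SafeFin x p u → A.SafeFin x q u) ∧
  (∀ w : ℕ → α, A.SafeInf x p w → A.SafeInf x q w)

/-- Centralised: siblings (same parent) whose safe languages are included,
lie in the same SCC of their layer. -/
def Centralised (A : Layered Q α d) : Prop :=
  ∀ p q : Q, 2 ≤ A.layer p → A.layer q = A.layer p →
    A.muHat (A.layer p - 1) p = A.muHat (A.layer p - 1) q →
    A.SafeLE (A.layer p) p q →
    (∃ u : List α, A.runList p u = some q) ∧ (∃ v : List α, A.runList q v = some p)

/-- `L(p) = L(q)`: all leaves above (the layer-1 ancestor of) `p` and all leaves above `q`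
recognise the same language in `⟦A⟧`. -/
def LangEq1 (A : Layered Q α d) (p q : Q) : Prop :=
  ∀ l l' : Q, A.IsLeaf l → A.IsLeaf l' → A.muHat 1 l = A.muHat 1 p →
    A.muHat 1 l' = A.muHat 1 q → ∀ w : ℕ → α, (A.SemAccept l w ↔ A.SemAccept l' w)

/-- The equivalence `p ≈_x q`: language equivalence together with equality of all
`y`-safe languages for `2 ≤ y ≤ x`. -/
def ApproxEq (A : Layered Q α d) (x : ℕ) (p q : Q) : Prop :=
  A.LangEq1 p q ∧ ∀ y : ℕ, 2 ≤ y → y ≤ x →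
    ((∀ u : List α, A.SafeFin y p u ↔ A.SafeFin y q u) ∧
     (∀ w : ℕ → α, A.SafeInf y p w ↔ A.SafeInf y q w))

/-- Safe minimality: `≈_x`-equivalent states of the same layer are equal. -/
def SafeMinimal (A : Layered Q α d) : Prop :=
  ∀ p q : Q, A.layer p = A.layer q → A.ApproxEq (A.layer p) p q → p = q

/-- `z` is a central sequence for the state `p` (of layer `x = layer p`). -/
def IsCentralSeq (A : Layered Q α d) (p : Q) (z : List α) : Prop :=
  z ≠ [] ∧ A.runList p z = some p ∧
  (∀ q : Q, A.layer q = A.layer p →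
    A.muHat (A.layer p - 1) q = A.muHat (A.layer p - 1) p →
    (A.runList q z = some p ∨ A.runList q z = none)) ∧
  (∀ q' : Q, A.layer q' = A.layer p + 1 →
    A.muHat (A.layer p - 1) q' = A.muHat (A.layer p - 1) p →
    A.runList q' z = none)

end Layered

/-! ### Morphisms of layered automata -/

/-- A morphism of layered automata. -/
structure IsLayMorphism {Q R α : Type} {d d' : ℕ} (A : Layered Q α d) (B : Layered R α d')
    (φ : Q → R) : Prop where
  map_init : φ A.init = B.init
  map_step : ∀ q a q', A.δ q a = some q' → B.δ (φ q) a = some (φ q')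
  map_anc : ∀ p q, A.IsAncestor p q → B.IsAncestor (φ p) (φ q)

/-- A strong morphism of layered automata additionally preserves non-transitions. -/
def IsStrongLayMorphism {Q R α : Type} {d d' : ℕ} (A : Layered Q α d) (B : Layered R α d')
    (φ : Q → R) : Prop :=
  IsLayMorphism A B φ ∧ ∀ q a, A.δ q a = none → B.δ (φ q) a = none

/-- An isomorphism of layered automata: a bijection on states that restricts to
isomorphisms of the layer transition systems, preserves the initial state, and
commutes with the morphisms `μ`. -/
structure IsLayIso {Q R α : Type} {d d' : ℕ} (A : Layered Q α d) (B : Layered R α d')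
    (φ : Q ≃ R) : Prop where
  map_layer : ∀ q, B.layer (φ q) = A.layer q
  map_init : φ A.init = B.init
  map_mu : ∀ q, φ (A.μ q) = B.μ (φ q)
  map_step : ∀ q a, (A.δ q a).map φ = B.δ (φ q) a

/-- `L(⟦A⟧) = L(⟦B⟧)`: the semantics automata (with any choice of initial leaf states
above the respective initial states) accept the same infinite words. -/
def SemLangEq {Q R α : Type} {d d' : ℕ} (A : Layered Q α d) (B : Layered R α d') : Prop :=
  ∀ (p : Q) (q : R), A.IsLeaf p → A.muHat 1 p = A.init → B.IsLeaf q → B.muHat 1 q = B.init →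
    ∀ w : ℕ → α, (A.SemAccept p w ↔ B.SemAccept q w)

/-! ### Deterministic parity automata -/

/-- A deterministic parity automaton over `α` with priorities in `[1,d]`. -/
structure DPA (Q α : Type) (d : ℕ) where
  init : Q
  next : Q → α → Q
  prio : Q → α → ℕ
  prio_pos : ∀ q a, 1 ≤ prio q a
  prio_le : ∀ q a, prio q a ≤ d

namespace DPA

variable {Q α : Type} {d : ℕ}

/-- The unique run of a DPA on an infinite word. -/
def run (B : DPA Q α d) (w : ℕ → α) : ℕ → Q
  | 0 => B.init
  | n + 1 => B.next (run B w n) (w n)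

/-- Acceptance by a DPA: the priorities along the unique run satisfy parity. -/
def Accepts (B : DPA Q α d) (w : ℕ → α) : Prop :=
  ParityAccept (fun i => B.prio (B.run w i) (w i))

end DPA

/-- `L` is ω-regular: recognised by some deterministic parity automaton. -/
def IsOmegaRegular {α : Type} (L : Set (ℕ → α)) : Prop :=
  ∃ (n d : ℕ) (B : DPA (Fin n) α d), ∀ w : ℕ → α, w ∈ L ↔ B.Accepts w

/-! ### Nondeterministic coBüchi automata -/

/-- A (complete) nondeterministic coBüchi automaton: transitions carry priorities in `{1,2}`. -/
structure NCA (Q α : Type) where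
  init : Q
  trans : Q → α → ℕ → Q → Prop
  prio_mem : ∀ q a x q', trans q a x q' → x = 1 ∨ x = 2
  complete : ∀ q a, ∃ x q', trans q a x q'

namespace NCA

variable {Q α : Type}

/-- Nondeterministic acceptance from the state `q`. -/
def AcceptFrom (B : NCA Q α) (q : Q) (w : ℕ → α) : Prop :=
  ∃ (ρ : ℕ → Q) (pri : ℕ → ℕ), ρ 0 = q ∧
    (∀ i : ℕ, B.trans (ρ i) (w i) (pri i) (ρ (i + 1))) ∧ ParityAccept pri

/-- Semantic determinism: every `a`-successor of `p` recognises `a⁻¹ L(p)`. -/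
def SemDet (B : NCA Q α) : Prop :=
  ∀ p a x q, B.trans p a x q →
    ∀ w : ℕ → α, (B.AcceptFrom q w ↔ B.AcceptFrom p (prependW [a] w))

/-- Safe determinism: all `a`-transitions from a state carry the same priority, and
there is at most one `a`-transition of priority `2` from each state. -/
def SafeDet (B : NCA Q α) : Prop :=
  (∀ q a x q' x' q'', B.trans q a x q' → B.trans q a x' q'' → x = x') ∧
  (∀ q a q' q'', B.trans q a 2 q' → B.trans q a 2 q'' → q' = q'')

/-- 1-saturation: priority-1 transitions go to all language-equivalent states. -/
def OneSaturated (B : NCA Q α) : Prop :=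
  ∀ q a p p', B.trans q a 1 p →
    (∀ w : ℕ → α, (B.AcceptFrom p' w ↔ B.AcceptFrom p w)) → B.trans q a 1 p'

end NCA

/-! ### Simple-by-priorities alternating parity automata (abstract) -/

/-- A simple-by-priorities alternating parity automaton: a complete transition system
over `α × [1,d]` in which all `a`-transitions from a state carry the same priority. -/
structure SPA (Q α : Type) (d : ℕ) where
  init : Q
  step : Q → α → Q → Prop
  prio : Q → α → ℕ
  prio_pos : ∀ q a, 1 ≤ prio q a
  prio_le : ∀ q a, prio q a ≤ d
  complete : ∀ q a, ∃ q', step q a q'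

/-! ### The congruence on tuples of finite words -/

/-- The data of the congruence at one level (tuples of a fixed length,
represented as reversed lists of components: the head is the last component). -/
structure CongrLevel (α : Type) where
  bot : List (List α) → Prop
  eq : List (List α) → List (List α) → Prop
  ptd : List (List α) → Prop

/-- Concatenate a finite word to the last component of a tuple
(tuples are represented as reversed lists: the head is the last component). -/
def tcat {α : Type} (t : List (List α)) (v : List α) : List (List α) :=
  match t with
  | h :: rest => (h ++ v) :: rest
  | [] => []

/-- Merge the last two components of a tuple. -/
def tmerge {α : Type} (t : List (List α)) : List (List α) :=
  match t with
  | u' :: h :: rest => (h ++ u') :: rest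
  | t' => t'

/-- The congruence data at level `n` (handling tuples of length `n+1`), defined by
recursion on the level, following the inductive definition of `≈ ⊥`, `≈` and `pointed`. -/
def congrData {α : Type} [Inhabited α] (L : Set (ℕ → α)) : ℕ → CongrLevel α
  | 0 =>
    { bot := fun _ => False
      eq := fun t s =>
        match t, s with
        | [u], [v] => ∀ w : ℕ → α, (prependW u w ∈ L ↔ prependW v w ∈ L)
        | _, _ => False
      ptd := fun _ => True }
  | n + 1 =>
    let C := congrData L n
    let bot : List (List α) → Prop := fun t =>
      match t with
      | u' :: ubar =>
        C.bot (tmerge (u' :: ubar)) ∨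
        ∀ w : List α, w ≠ [] → C.eq (tcat (tmerge (u' :: ubar)) w) ubar →
          ((prependW ubar.reverse.flatten (perWord (u' ++ w)) ∈ L) ↔ Even (n + 1))
      | [] => True
    let eq : List (List α) → List (List α) → Prop := fun t s =>
      C.eq (tmerge t) (tmerge s) ∧ ∀ v : List α, (bot (tcat t v) ↔ bot (tcat s v))
    let ptd : List (List α) → Prop := fun t =>
      match t with
      | u' :: ubar =>
        ¬ bot (u' :: ubar) ∧ C.ptd ubar ∧
        ∀ (vbar : List (List α)) (v' : List α), vbar.length = n + 1 → C.ptd vbar →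
          C.eq (tcat vbar v') ubar → ¬ bot ((v' ++ u') :: vbar) →
          eq ((v' ++ u') :: vbar) (u' :: ubar)
      | [] => False
    { bot := bot, eq := eq, ptd := ptd }

/-- `t ≈ ⊥` (for a nonempty tuple `t`, in reversed representation). -/
def TupBot {α : Type} [Inhabited α] (L : Set (ℕ → α)) (t : List (List α)) : Prop :=
  (congrData L (t.length - 1)).bot t

/-- `t ≈ s` (for nonempty tuples of the same length, in reversed representation). -/
def TupEq {α : Type} [Inhabited α] (L : Set (ℕ → α)) (t s : List (List α)) : Prop :=
  t.length = s.length ∧ (congrData L (t.length - 1)).eq t s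

/-- `t` is pointed. -/
def TupPointed {α : Type} [Inhabited α] (L : Set (ℕ → α)) (t : List (List α)) : Prop :=
  (congrData L (t.length - 1)).ptd t

/-- `cls` exhibits `A` as (a copy of) the congruence automaton `A_≈` of `L`: its states
are the `≈`-classes of pointed tuples (the layer being the tuple length), transitions
are given by concatenation in the last component, the initial state is the class of
`(ε)`, and the morphisms are given by merging the last two components. -/
structure IsCongrAut {α : Type} [Inhabited α] (L : Set (ℕ → α)) {Q : Type} {d : ℕ}
    (A : Layered Q α d) (cls : (t : List (List α)) → TupPointed L t → Q) : Prop where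
  surj : ∀ q : Q, ∃ (t : List (List α)) (ht : TupPointed L t), cls t ht = q
  cls_eq : ∀ t ht s hs, cls t ht = cls s hs ↔ TupEq L t s
  layer_eq : ∀ t ht, A.layer (cls t ht) = t.length
  init_eq : ∀ h : TupPointed L [([] : List α)], cls [([] : List α)] h = A.init
  step_some : ∀ t ht (a : α) (h' : TupPointed L (tcat t [a])),
    A.δ (cls t ht) a = some (cls (tcat t [a]) h')
  step_none : ∀ t ht (a : α), TupBot L (tcat t [a]) → A.δ (cls t ht) a = none
  mu_eq : ∀ (u' : List α) (ubar : List (List α)) (h : TupPointed L (u' :: ubar))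
    (h' : TupPointed L (tmerge (u' :: ubar))), ubar ≠ [] →
    A.μ (cls (u' :: ubar) h) = cls (tmerge (u' :: ubar)) h'

end

/-!
Both players use the same resolver: at a step of priority `x` it moves, if it can, to a
successor lying above layer `x`, and among those to one whose `(x+1)`-ancestor is reached by
the longest suffix of the word read so far.

Let `X` be the highest layer in which `w` is ultimately safe, and consider a run whose steps of
least recurring priority `y` follow this resolver. From some time `N` on, the `y`-ancestors of
the run follow a safe run of `T_y`. If a `(y+1)`-state above it were safe from some time `m` on,
then at every later step of priority `y` the resolver would climb onto a run of `T_{y+1}` that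
starts at one of finitely many states and at a position `≤ m`, and that dies at the next step
of priority `y`; two such steps would share the start of their runs, which is absurd. So the
`y`-ancestor at time `N` is strongly safe, and so, by maximality of `X`, is the `X`-state that
witnesses ultimate safety at time `N`. Both lie above the same state of `T_1`, so consistency
forces `y ≡ X (mod 2)`: the player of the parity of `X` wins by following the resolver.
-/

open Filter

section Words

variable {α : Type}

@[simp]
lemma wordPrefix_length (w : ℕ → α) (n : ℕ) : (wordPrefix w n).length = n := by
  simp [wordPrefix]

@[simp]
lemma wordPrefix_zero (w : ℕ → α) : wordPrefix w 0 = [] := rfl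

lemma wordPrefix_succ (w : ℕ → α) (n : ℕ) :
    wordPrefix w (n + 1) = wordPrefix w n ++ [w n] := by
  simp only [wordPrefix, List.ofFn_succ', List.concat_eq_append, Fin.val_last]
  rfl

@[simp]
lemma wordDrop_zero (w : ℕ → α) : wordDrop w 0 = w := by
  funext i; simp [wordDrop]

@[simp]
lemma wordDrop_wordDrop (w : ℕ → α) (m k : ℕ) :
    wordDrop (wordDrop w m) k = wordDrop w (m + k) := by
  funext i; simp [wordDrop, add_assoc]

lemma wordPrefix_add (w : ℕ → α) (m k : ℕ) :
    wordPrefix w (m + k) = wordPrefix w m ++ wordPrefix (wordDrop w m) k := by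
  simp only [wordPrefix, wordDrop, List.ofFn_add]
  rfl

lemma wordPrefix_drop (w : ℕ → α) {n m : ℕ} (h : m ≤ n) :
    (wordPrefix w n).drop m = wordPrefix (wordDrop w m) (n - m) := by
  conv_lhs => rw [← Nat.add_sub_cancel' h, wordPrefix_add]
  exact List.drop_left' (wordPrefix_length w m)

end Words

section MinInfOften

variable {pi : ℕ → ℕ}

lemma mem_minInfOften_set_iff {x : ℕ} :
    x ∈ {x : ℕ | ∀ N : ℕ, ∃ n : ℕ, N ≤ n ∧ pi n = x} ↔ ∃ᶠ n in atTop, pi n = x :=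
  frequently_atTop.symm

lemma frequently_eq_minInfOften {d : ℕ} (hpi : ∀ i, pi i ≤ d) :
    ∃ᶠ n in atTop, pi n = minInfOften pi := by
  have hval : ∃ x, ∃ᶠ n in atTop, pi n = x := by
    obtain ⟨x, hx⟩ := Finite.exists_infinite_fiber (fun n => (⟨pi n, Nat.lt_succ_of_le (hpi n)⟩ :
      Fin (d + 1)))
    refine ⟨x, Nat.frequently_atTop_iff_infinite.2 ?_⟩
    refine (Set.infinite_coe_iff.1 hx).mono fun n hn => ?_
    simp only [Set.mem_preimage, Set.mem_singleton_iff] at hn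
    simp [← hn]
  obtain ⟨x, hx⟩ := hval
  exact mem_minInfOften_set_iff.1 (Nat.sInf_mem ⟨x, mem_minInfOften_set_iff.2 hx⟩)

lemma eventually_minInfOften_le : ∀ᶠ n in atTop, minInfOften pi ≤ pi n := by
  have h : ∀ z ∈ Finset.range (minInfOften pi), ∀ᶠ n in atTop, pi n ≠ z := fun z hz =>
    not_frequently.1 fun hfreq =>
      Nat.notMem_of_lt_sInf (Finset.mem_range.1 hz) (mem_minInfOften_set_iff.2 hfreq)
  filter_upwards [(Finset.eventually_all _).2 h] with n hn
  by_contra hlt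
  exact hn (pi n) (Finset.mem_range.2 (not_le.1 hlt)) rfl

end MinInfOften

section History

variable {Q α : Type}

def history (ρ : ℕ → Q) (w : ℕ → α) (i : ℕ) : List (Q × α) :=
  List.ofFn fun j : Fin i => (ρ j, w j)

lemma history_map_snd_append (ρ : ℕ → Q) (w : ℕ → α) (i : ℕ) :
    (history ρ w i).map Prod.snd ++ [w i] = wordPrefix w (i + 1) := by
  rw [wordPrefix_succ, history, List.map_ofFn]
  rfl

lemma exists_seq_of_history (f : List (Q × α) → Q → α → Q) (q0 : Q) (w : ℕ → α) :
    ∃ ρ : ℕ → Q, ρ 0 = q0 ∧ ∀ i, ρ (i + 1) = f (history ρ w i) (ρ i) (w i) := by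
  let g : ℕ → Q × List (Q × α) :=
    fun n => Nat.rec (q0, []) (fun i s => (f s.2 s.1 (w i), s.2 ++ [(s.1, w i)])) n
  have hg : ∀ i, (g i).2 = history (fun j => (g j).1) w i := by
    intro i
    induction i with
    | zero => rfl
    | succ i ih =>
      simp only [history, List.ofFn_succ', List.concat_eq_append, Fin.val_castSucc,
        Fin.val_last] at ih ⊢
      rw [← ih]
  exact ⟨fun i => (g i).1, rfl, fun i => by rw [← hg]⟩

end History

namespace Layered

variable {Q α : Type} {d : ℕ}

section Runs

variable (A : Layered Q α d)

@[simp]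
lemma runList_nil (q : Q) : A.runList q [] = some q := rfl

lemma runList_cons (q : Q) (a : α) (u : List α) :
    A.runList q (a :: u) = (A.δ q a).bind fun q' => A.runList q' u := by
  cases h : A.δ q a <;> simp [runList, h]

lemma runList_append (q : Q) (u v : List α) :
    A.runList q (u ++ v) = (A.runList q u).bind fun p => A.runList p v := by
  induction u generalizing q with
  | nil => rfl
  | cons a u ih => cases h : A.δ q a <;> simp [runList_cons, h, ih]

lemma runList_singleton (q : Q) (a : α) : A.runList q [a] = A.δ q a := by
  cases h : A.δ q a <;> simp [runList_cons, h]

lemma runList_wordPrefix_succ (q : Q) (v : ℕ → α) (k : ℕ) :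
    A.runList q (wordPrefix v (k + 1)) =
      (A.runList q (wordPrefix v k)).bind fun p => A.δ p (v k) := by
  simp only [wordPrefix_succ, runList_append, runList_singleton]

lemma runList_wordPrefix_of_le {q : Q} {v : ℕ → α} {k n : ℕ} (hkn : k ≤ n)
    (h : A.runList q (wordPrefix v k) = none) : A.runList q (wordPrefix v n) = none := by
  rw [← Nat.add_sub_cancel' hkn, wordPrefix_add, runList_append, h]
  rfl

lemma layer_of_runList {q q' : Q} {u : List α} (h : A.runList q u = some q') :
    A.layer q' = A.layer q := by
  induction u generalizing q with
  | nil => cases h; rfl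
  | cons a u ih =>
    rw [runList_cons, Option.bind_eq_some_iff] at h
    obtain ⟨q1, hq1, h⟩ := h
    rw [ih h, A.δ_layer q a q1 hq1]

lemma runList_isSome_of_layer_eq_one {q : Q} (hq : A.layer q = 1) (v : ℕ → α) (n : ℕ) :
    (A.runList q (wordPrefix v n)).isSome := by
  induction n with
  | zero => rfl
  | succ n ih =>
    obtain ⟨q1, hq1⟩ := Option.isSome_iff_exists.1 ih
    rw [runList_wordPrefix_succ, hq1, Option.bind_some]
    exact A.complete1 q1 (v n) (by rw [A.layer_of_runList hq1, hq])

end Runs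

section Ancestors

variable (A : Layered Q α d)

lemma layer_iterate_mu {q : Q} {k : ℕ} (hk : k < A.layer q) :
    A.layer (A.μ^[k] q) = A.layer q - k := by
  induction k with
  | zero => rfl
  | succ k ih =>
    rw [Function.iterate_succ_apply']
    have := A.μ_layer _ (by rw [ih (by omega)]; omega)
    omega

lemma layer_muHat {q : Q} {x : ℕ} (hx : 1 ≤ x) (hxq : x ≤ A.layer q) :
    A.layer (A.muHat x q) = x := by
  rw [muHat, A.layer_iterate_mu (by omega)]
  omega

lemma muHat_self {q : Q} {x : ℕ} (h : A.layer q = x) : A.muHat x q = q := by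
  simp [muHat, h]

lemma muHat_of_layer_le {q : Q} {x : ℕ} (h : A.layer q ≤ x) : A.muHat x q = q := by
  simp [muHat, Nat.sub_eq_zero_of_le h]

lemma le_layer_of_layer_muHat {q : Q} {x : ℕ} (h : A.layer (A.muHat x q) = x) :
    x ≤ A.layer q := by
  by_contra hlt
  rw [A.muHat_of_layer_le (by omega)] at h
  omega

lemma muHat_muHat {q : Q} {z x : ℕ} (hz : 1 ≤ z) (hzx : z ≤ x) (hx : x ≤ A.layer q) :
    A.muHat z (A.muHat x q) = A.muHat z q := by
  rw [muHat, A.layer_muHat (hz.trans hzx) hx, muHat, muHat, ← Function.iterate_add_apply]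
  congr 1
  omega

lemma muHat_of_layer_eq_succ {q : Q} {x : ℕ} (h : A.layer q = x + 1) : A.muHat x q = A.μ q := by
  simp [muHat, h]

lemma delta_iterate_mu {q q' : Q} {a : α} (h : A.δ q a = some q') {k : ℕ} (hk : k < A.layer q) :
    A.δ (A.μ^[k] q) a = some (A.μ^[k] q') := by
  induction k with
  | zero => exact h
  | succ k ih =>
    simp only [Function.iterate_succ_apply']
    exact A.μ_morph _ a _ (by rw [A.layer_iterate_mu (by omega)]; omega) (ih (by omega))

lemma delta_muHat {q q' : Q} {a : α} {z : ℕ} (hz : 1 ≤ z) (hzq : z ≤ A.layer q)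
    (h : A.δ q a = some q') : A.δ (A.muHat z q) a = some (A.muHat z q') := by
  have := A.delta_iterate_mu h (k := A.layer q - z) (by omega)
  rwa [muHat, muHat, A.δ_layer q a q' h]

lemma runList_muHat {q q' : Q} {u : List α} {z : ℕ} (hz : 1 ≤ z) (hzq : z ≤ A.layer q)
    (h : A.runList q u = some q') : A.runList (A.muHat z q) u = some (A.muHat z q') := by
  induction u generalizing q with
  | nil => cases h; rfl
  | cons a u ih =>
    rw [runList_cons, Option.bind_eq_some_iff] at h
    obtain ⟨q1, hq1, h⟩ := h
    rw [runList_cons, A.delta_muHat hz hzq hq1, Option.bind_some]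
    exact ih (by rwa [A.δ_layer q a q1 hq1]) h

lemma exists_leaf_muHat_eq (r : Q) :
    ∃ p, A.IsLeaf p ∧ A.layer r ≤ A.layer p ∧ A.muHat (A.layer r) p = r := by
  induction h : d - A.layer r generalizing r with
  | zero =>
    refine ⟨r, fun p hp hμ => ?_, le_rfl, A.muHat_self rfl⟩
    have := A.μ_layer p hp
    have := A.layer_le p
    subst hμ
    omega
  | succ k ih =>
    by_cases hex : ∃ p, 1 < A.layer p ∧ A.μ p = r
    · obtain ⟨p, hp, rfl⟩ := hex
      have hpl := A.μ_layer p hp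
      obtain ⟨ℓ, hℓ, hle, hμ⟩ := ih p (by omega)
      refine ⟨ℓ, hℓ, by omega, ?_⟩
      rw [← A.muHat_muHat (A.layer_pos _) (by omega) hle, hμ,
        A.muHat_of_layer_eq_succ hpl.symm]
    · push Not at hex
      exact ⟨r, fun p hp => hex p hp, le_rfl, A.muHat_self rfl⟩

end Ancestors

section SemanticsAutomaton

variable (A : Layered Q α d)

lemma layerOf_spec (q : Q) (a : α) :
    1 ≤ A.layerOf q a ∧ (A.δ (A.muHat (A.layerOf q a) q) a).isSome := by
  have h1 : (A.δ (A.muHat 1 q) a).isSome :=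
    A.complete1 _ a (A.layer_muHat le_rfl (A.layer_pos q))
  exact ⟨Nat.le_findGreatest (A.layer_pos q) h1,
    Nat.findGreatest_spec (P := fun x => (A.δ (A.muHat x q) a).isSome) (A.layer_pos q) h1⟩

lemma one_le_layerOf (q : Q) (a : α) : 1 ≤ A.layerOf q a := (A.layerOf_spec q a).1

lemma layerOf_le (q : Q) (a : α) : A.layerOf q a ≤ A.layer q := Nat.findGreatest_le _

lemma delta_muHat_eq_none {q : Q} {a : α} {z : ℕ} (hz : A.layerOf q a < z)
    (hzq : z ≤ A.layer q) : A.δ (A.muHat z q) a = none :=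
  Option.not_isSome_iff_eq_none.1 (Nat.findGreatest_is_greatest hz hzq)

lemma layerOf_le_of_semStep {q q' : Q} {a : α} (h : A.semStep q a q') :
    A.layerOf q a ≤ A.layer q' := by
  refine A.le_layer_of_layer_muHat ?_
  rw [A.δ_layer _ _ _ h.2, A.layer_muHat (A.one_le_layerOf q a) (A.layerOf_le q a)]

lemma delta_muHat_of_semStep {q q' : Q} {a : α} (h : A.semStep q a q') {z : ℕ} (hz : 1 ≤ z)
    (hzx : z ≤ A.layerOf q a) : A.δ (A.muHat z q) a = some (A.muHat z q') := by
  have hx := A.layerOf_le q a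
  have := A.delta_muHat hz (by rwa [A.layer_muHat (hz.trans hzx) hx]) h.2
  rwa [A.muHat_muHat hz hzx hx, A.muHat_muHat hz hzx (A.layerOf_le_of_semStep h)] at this

lemma exists_semStep_muHat_eq {q t : Q} {a : α} (ht : A.layer t = A.layerOf q a + 1)
    (hδ : A.δ (A.muHat (A.layerOf q a) q) a = some (A.μ t)) :
    ∃ ℓ, A.semStep q a ℓ ∧ A.layerOf q a + 1 ≤ A.layer ℓ ∧
      A.muHat (A.layerOf q a + 1) ℓ = t := by
  obtain ⟨ℓ, hℓ, hle, hμ⟩ := A.exists_leaf_muHat_eq t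
  rw [ht] at hle hμ
  refine ⟨ℓ, ⟨hℓ, ?_⟩, hle, hμ⟩
  rwa [← A.muHat_muHat (A.one_le_layerOf q a) (by omega) hle, hμ,
    A.muHat_of_layer_eq_succ ht]

lemma exists_semStep (q : Q) (a : α) : ∃ q', A.semStep q a q' := by
  obtain ⟨r, hr⟩ := Option.isSome_iff_exists.1 (A.layerOf_spec q a).2
  have hr' : A.layer r = A.layerOf q a := by
    rw [A.δ_layer _ _ _ hr, A.layer_muHat (A.one_le_layerOf q a) (A.layerOf_le q a)]
  obtain ⟨ℓ, hℓ, -, hμ⟩ := A.exists_leaf_muHat_eq r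
  rw [hr'] at hμ
  exact ⟨ℓ, hℓ, by rw [hμ]; exact hr⟩

end SemanticsAutomaton

section RunSegments

variable {A : Layered Q α d} {w : ℕ → α} {ρ : ℕ → Q}

lemma runList_muHat_segment (hstep : ∀ i, A.semStep (ρ i) (w i) (ρ (i + 1))) {z N : ℕ}
    (hz : 1 ≤ z) {k : ℕ} (hprio : ∀ j, N ≤ j → j < N + k → z ≤ A.layerOf (ρ j) (w j)) :
    A.runList (A.muHat z (ρ N)) (wordPrefix (wordDrop w N) k) = some (A.muHat z (ρ (N + k))) := by
  induction k with
  | zero => rfl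
  | succ k ih =>
    rw [runList_wordPrefix_succ, ih fun j h1 h2 => hprio j h1 (by omega), Option.bind_some]
    exact A.delta_muHat_of_semStep (hstep (N + k)) hz (hprio _ (by omega) (by omega))

lemma runList_muHat_segment_eq_none (hstep : ∀ i, A.semStep (ρ i) (w i) (ρ (i + 1))) {z i i' : ℕ}
    (hz : 1 ≤ z) (hlayer : z ≤ A.layer (ρ (i + 1))) (hii' : i < i')
    (hprio : A.layerOf (ρ i') (w i') < z) :
    A.runList (A.muHat z (ρ (i + 1))) (wordPrefix (wordDrop w (i + 1)) (i' - i)) = none := by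
  have hex : ∃ j, i < j ∧ A.layerOf (ρ j) (w j) < z := ⟨i', hii', hprio⟩
  obtain ⟨hj, hjz⟩ := Nat.find_spec hex
  set j := Nat.find hex
  have hseg := runList_muHat_segment hstep hz (N := i + 1) (k := j - (i + 1)) fun l h1 h2 =>
    not_lt.1 fun hl => Nat.find_min hex (by omega : l < j) ⟨by omega, hl⟩
  rw [show i + 1 + (j - (i + 1)) = j by omega] at hseg
  have hlj : z ≤ A.layer (ρ j) := A.le_layer_of_layer_muHat (by
    rw [A.layer_of_runList hseg, A.layer_muHat hz hlayer])
  have hji' : j ≤ i' := Nat.find_min' hex ⟨hii', hprio⟩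
  refine A.runList_wordPrefix_of_le (k := j - (i + 1) + 1) (by omega : _ ≤ i' - i) ?_
  rw [runList_wordPrefix_succ, hseg, Option.bind_some,
    show wordDrop w (i + 1) (j - (i + 1)) = w j by simp only [wordDrop]; congr 1; omega]
  exact A.delta_muHat_eq_none hjz hlj

end RunSegments

section LongestSuffixResolver

variable (A : Layered Q α d)

lemma exists_runList_drop_longestSuffixLen (u : List α) (r : Q) :
    ∃ c, A.runList c (u.drop (u.length - A.longestSuffixLen u r)) = some r := by
  by_cases h : A.longestSuffixLen u r = 0
  · exact ⟨r, by simp [h]⟩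
  · obtain ⟨-, c, -, hc⟩ := Nat.findGreatest_of_ne_zero rfl h
    exact ⟨c, hc⟩

lemma le_longestSuffixLen {u : List α} {r c : Q} {j : ℕ} (hc : A.layer c = A.layer r)
    (h : A.runList c (u.drop j) = some r) : u.length - j ≤ A.longestSuffixLen u r := by
  by_cases hj : j ≤ u.length
  · refine Nat.le_findGreatest (by omega) ⟨by omega, c, hc, ?_⟩
    rwa [Nat.sub_sub_self hj]
  · omega

/-- The `+ 1` makes every successor above layer `x` beat every successor in a layer `≤ x`. -/
noncomputable def suffixScore (u : List α) (x : ℕ) (q' : Q) : ℕ :=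
  if x + 1 ≤ A.layer q' then A.longestSuffixLen u (A.muHat (x + 1) q') + 1 else 0

lemma exists_semStep_isMax [Finite Q] (q : Q) (a : α) (f : Q → ℕ) :
    ∃ q', A.semStep q a q' ∧ ∀ q'', A.semStep q a q'' → f q'' ≤ f q' := by
  obtain ⟨q', hq', hmax⟩ := Set.exists_max_image {q' | A.semStep q a q'} f
    (Set.toFinite _) (A.exists_semStep q a)
  exact ⟨q', hq', hmax⟩

noncomputable def lsResolver [Finite Q] (h : List (Q × α)) (q : Q) (a : α) : Q :=
  (A.exists_semStep_isMax q a (A.suffixScore (h.map Prod.snd ++ [a]) (A.layerOf q a))).choose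

variable [Finite Q]

lemma semStep_lsResolver (h : List (Q × α)) (q : Q) (a : α) :
    A.semStep q a (A.lsResolver h q a) :=
  (A.exists_semStep_isMax q a _).choose_spec.1

lemma lsResolver_eveResolver : A.EveResolver A.lsResolver :=
  fun h q a _ => A.semStep_lsResolver h q a

lemma lsResolver_adamResolver : A.AdamResolver A.lsResolver :=
  fun h q a _ => A.semStep_lsResolver h q a

lemma lsResolver_suffix {h : List (Q × α)} {q t c : Q} {a : α} {j : ℕ}
    (ht : A.layer t = A.layerOf q a + 1)
    (hδ : A.δ (A.muHat (A.layerOf q a) q) a = some (A.μ t)) (hc : A.layer c = A.layer t)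
    (hrun : A.runList c ((h.map Prod.snd ++ [a]).drop j) = some t) :
    A.layerOf q a + 1 ≤ A.layer (A.lsResolver h q a) ∧ ∃ c' j', j' ≤ j ∧
      A.runList c' ((h.map Prod.snd ++ [a]).drop j') =
        some (A.muHat (A.layerOf q a + 1) (A.lsResolver h q a)) := by
  set u := h.map Prod.snd ++ [a]
  set θ := A.lsResolver h q a
  obtain ⟨ℓ, hℓ, hℓl, hℓμ⟩ := A.exists_semStep_muHat_eq ht hδ
  have hmax : A.suffixScore u (A.layerOf q a) ℓ ≤ A.suffixScore u (A.layerOf q a) θ :=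
    (A.exists_semStep_isMax q a _).choose_spec.2 ℓ hℓ
  have hθl : A.layerOf q a + 1 ≤ A.layer θ := by
    by_contra hlt
    simp [suffixScore, hℓl, hlt] at hmax
  simp only [suffixScore, hℓl, hθl, if_true, hℓμ, add_le_add_iff_right] at hmax
  have hlen := A.le_longestSuffixLen hc hrun
  obtain ⟨c', hc'⟩ := A.exists_runList_drop_longestSuffixLen u (A.muHat (A.layerOf q a + 1) θ)
  exact ⟨hθl, c', _, by omega, hc'⟩

end LongestSuffixResolver

section SafeChild

variable {A : Layered Q α d} [Finite Q] {w : ℕ → α} {ρ : ℕ → Q} {y m : ℕ} {p : Q}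

lemma exists_suffix_run_of_safe_child (hstep : ∀ i, A.semStep (ρ i) (w i) (ρ (i + 1)))
    (hy : 1 ≤ y) (hge : ∀ i, m ≤ i → y ≤ A.layerOf (ρ i) (w i))
    (hp : A.layer p = y + 1) (hμ : A.μ p = A.muHat y (ρ m))
    (hsafe : A.SafeInf (y + 1) p (wordDrop w m)) {i : ℕ} (hmi : m ≤ i)
    (hi : A.layerOf (ρ i) (w i) = y)
    (hθ : ρ (i + 1) = A.lsResolver (history ρ w i) (ρ i) (w i)) :
    y + 1 ≤ A.layer (ρ (i + 1)) ∧ ∃ c b, b ≤ m ∧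
      A.runList c (wordPrefix (wordDrop w b) (i + 1 - b)) = some (A.muHat (y + 1) (ρ (i + 1))) := by
  obtain ⟨t, ht⟩ := Option.isSome_iff_exists.1 (hsafe (i + 1 - m))
  rw [A.muHat_self hp, show i + 1 - m = i - m + 1 by omega, runList_wordPrefix_succ,
    Option.bind_eq_some_iff] at ht
  obtain ⟨t0, ht0, htt⟩ := ht
  have hwi : wordDrop w m (i - m) = w i := by simp only [wordDrop]; congr 1; omega
  rw [hwi] at htt
  have ht0l : A.layer t0 = y + 1 := by rw [A.layer_of_runList ht0, hp]
  have hμt0 : A.μ t0 = A.muHat y (ρ i) := by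
    have hproj := A.runList_muHat hy (by omega) ht0
    rw [A.muHat_of_layer_eq_succ hp, hμ, runList_muHat_segment hstep hy fun j h _ => hge j h,
      show m + (i - m) = i by omega, A.muHat_of_layer_eq_succ ht0l] at hproj
    exact (Option.some.inj hproj).symm
  have hδ := A.μ_morph t0 (w i) t (by omega) htt
  rw [hμt0, ← hi] at hδ
  have hrun : A.runList p (((history ρ w i).map Prod.snd ++ [w i]).drop m) = some t := by
    rwa [history_map_snd_append, wordPrefix_drop w (by omega), show i + 1 - m = i - m + 1 by omega,
      runList_wordPrefix_succ, ht0, Option.bind_some, hwi]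
  obtain ⟨hl, c, b, hbm, hc⟩ := A.lsResolver_suffix
    (by rw [A.δ_layer _ _ _ htt, ht0l, hi]) hδ (by rw [A.δ_layer _ _ _ htt, ht0l, hp]) hrun
  rw [← hθ, hi] at hl hc
  rw [history_map_snd_append, wordPrefix_drop w (by omega)] at hc
  exact ⟨hl, c, b, hbm, hc⟩

/-- Pigeonhole on the start states and start positions of the suffix runs obtained at the
steps of priority `y`: each of these runs dies at the next such step. -/
lemma false_of_safe_child (hstep : ∀ i, A.semStep (ρ i) (w i) (ρ (i + 1)))
    (hy : 1 ≤ y) (hge : ∀ i, m ≤ i → y ≤ A.layerOf (ρ i) (w i))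
    (hfreq : ∃ᶠ i in atTop, A.layerOf (ρ i) (w i) = y)
    (hθ : ∀ i, A.layerOf (ρ i) (w i) = y →
      ρ (i + 1) = A.lsResolver (history ρ w i) (ρ i) (w i))
    (hp : A.layer p = y + 1) (hμ : A.μ p = A.muHat y (ρ m))
    (hsafe : A.SafeInf (y + 1) p (wordDrop w m)) : False := by
  have key : ∀ i, A.layerOf (ρ i) (w i) = y ∧ m ≤ i → ∃ c b, b ≤ m ∧
      (A.runList c (wordPrefix (wordDrop w b) (i + 1 - b))).isSome ∧
      ∀ i', i < i' → A.layerOf (ρ i') (w i') = y →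
        A.runList c (wordPrefix (wordDrop w b) (i' + 1 - b)) = none := by
    rintro i ⟨hi, hmi⟩
    obtain ⟨hl, c, b, hbm, hc⟩ :=
      exists_suffix_run_of_safe_child hstep hy hge hp hμ hsafe hmi hi (hθ i hi)
    refine ⟨c, b, hbm, by simp [hc], fun i' hii' hi' => ?_⟩
    rw [show i' + 1 - b = i + 1 - b + (i' - i) by omega, wordPrefix_add, runList_append, hc,
      Option.bind_some, wordDrop_wordDrop, show b + (i + 1 - b) = i + 1 by omega]
    exact runList_muHat_segment_eq_none hstep (by omega) hl hii' (by omega)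
  have : Nonempty Q := ⟨p⟩
  choose! c b hbm hsome hnone using key
  have hinf := Nat.frequently_atTop_iff_infinite.1 (hfreq.and_eventually (eventually_ge_atTop m))
  obtain ⟨i1, hi1, i2, hi2, hne, heq⟩ := hinf.exists_ne_map_eq_of_mapsTo
    (f := fun i => (c i, b i)) (t := Set.univ ×ˢ Set.Iic m)
    (fun i hi => by simp [hbm i hi]) (Set.finite_univ.prod (Set.finite_Iic m))
  simp only [Prod.mk.injEq] at heq
  rcases hne.lt_or_gt with h | h
  · simpa [← heq.1, ← heq.2, hnone i1 hi1 i2 h hi2.1] using hsome i2 hi2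
  · simpa [heq.1, heq.2, hnone i2 hi2 i1 h hi1.1] using hsome i1 hi1

end SafeChild

section StrongSafety

variable (A : Layered Q α d)

/-- The parity-free part of `StronglyAcc` and `StronglyRej`. -/
def StronglySafe (p : Q) (w : ℕ → α) : Prop :=
  A.SafeInf (A.layer p) p w ∧
  ∀ (n : ℕ) (p' : Q), A.layer p' = A.layer p + 1 →
    A.runList p (wordPrefix w n) = some (A.μ p') →
    ¬ A.SafeInf (A.layer p') p' (wordDrop w n)

variable {A}

lemma Consistent.even_layer_iff (hcons : A.Consistent) {p p' : Q} {w : ℕ → α}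
    (h1 : A.muHat 1 p = A.muHat 1 p') (hp : A.StronglySafe p w) (hp' : A.StronglySafe p' w) :
    Even (A.layer p) ↔ Even (A.layer p') := by
  constructor
  · intro he
    by_contra ho
    exact hcons ⟨p, p', w, h1, ⟨he, hp⟩, ⟨Nat.not_even_iff_odd.1 ho, hp'⟩⟩
  · intro he
    by_contra ho
    exact hcons ⟨p', p, w, h1.symm, ⟨he, hp'⟩, ⟨Nat.not_even_iff_odd.1 ho, hp⟩⟩

lemma stronglySafe_muHat_of_liminf [Finite Q] {w : ℕ → α} {ρ : ℕ → Q} {y N : ℕ}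
    (hstep : ∀ i, A.semStep (ρ i) (w i) (ρ (i + 1))) (hy : 1 ≤ y)
    (hge : ∀ i, N ≤ i → y ≤ A.layerOf (ρ i) (w i))
    (hfreq : ∃ᶠ i in atTop, A.layerOf (ρ i) (w i) = y)
    (hθ : ∀ i, A.layerOf (ρ i) (w i) = y →
      ρ (i + 1) = A.lsResolver (history ρ w i) (ρ i) (w i)) :
    A.StronglySafe (A.muHat y (ρ N)) (wordDrop w N) := by
  have hl : A.layer (A.muHat y (ρ N)) = y :=
    A.layer_muHat hy ((hge N le_rfl).trans (A.layerOf_le _ _))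
  have hseg k := runList_muHat_segment hstep hy (N := N) (k := k) fun j h _ => hge j h
  refine ⟨fun k => ?_, fun k p hp hrun hsafe => ?_⟩
  · rw [hl, SafeFin, A.muHat_self hl, hseg]
    rfl
  · rw [hl] at hp
    rw [hp, wordDrop_wordDrop] at hsafe
    exact false_of_safe_child hstep hy (fun i hi => hge i (by omega)) hfreq hθ hp
      (Option.some.inj (hrun.symm.trans (hseg k))) hsafe

lemma UltSafeFrom.eventually {q0 : Q} {x : ℕ} {w : ℕ → α} (h : A.UltSafeFrom q0 x w) :
    ∀ᶠ N in atTop, ∃ p, A.layer p = x ∧ A.runList q0 (wordPrefix w N) = some (A.muHat 1 p) ∧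
      A.SafeInf x p (wordDrop w N) := by
  obtain ⟨n, p, hp, hrun, hsafe⟩ := h
  have hsafe' k : (A.runList p (wordPrefix (wordDrop w n) k)).isSome := by
    simpa [SafeFin, A.muHat_self hp] using hsafe k
  filter_upwards [eventually_ge_atTop n] with N hN
  obtain ⟨p2, hp2⟩ := Option.isSome_iff_exists.1 (hsafe' (N - n))
  have hsplit k : wordPrefix w (N + k) =
      wordPrefix w n ++ wordPrefix (wordDrop w n) (N - n + k) := by
    rw [← wordPrefix_add]; congr 1; omega
  have hp2l : A.layer p2 = x := by rw [A.layer_of_runList hp2, hp]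
  refine ⟨p2, hp2l, ?_, fun k => ?_⟩
  · rw [← add_zero N, hsplit, add_zero, runList_append, hrun, Option.bind_some]
    exact A.runList_muHat le_rfl (A.layer_pos p) hp2
  · have := hsafe' (N - n + k)
    rwa [wordPrefix_add, runList_append, hp2, Option.bind_some, wordDrop_wordDrop,
      show n + (N - n) = N by omega, ← A.muHat_self hp2l] at this

lemma stronglySafe_of_maximal {q0 q : Q} {X n : ℕ} {w : ℕ → α}
    (hmax : ∀ z, A.UltSafeFrom q0 z w → z ≤ X) (hq : A.layer q = X)
    (hrun : A.runList q0 (wordPrefix w n) = some (A.muHat 1 q))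
    (hsafe : A.SafeInf X q (wordDrop w n)) : A.StronglySafe q (wordDrop w n) := by
  refine ⟨hq ▸ hsafe, fun k p' hp' hrun' hsafe' => ?_⟩
  have hμ : A.muHat 1 (A.μ p') = A.muHat 1 p' := by
    rw [← A.muHat_of_layer_eq_succ hp', A.muHat_muHat le_rfl (A.layer_pos q) (by omega)]
  have hult : A.UltSafeFrom q0 (X + 1) w := by
    refine ⟨n + k, p', by omega, ?_, by rwa [hp', hq, wordDrop_wordDrop] at hsafe'⟩
    rw [wordPrefix_add, runList_append, hrun, Option.bind_some, ← hμ]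
    exact A.runList_muHat le_rfl (A.layer_pos q) hrun'
  have := hmax _ hult
  omega

end StrongSafety

section Plays

variable {A : Layered Q α d}

lemma exists_play (w : ℕ → α) (q0 : Q) {σ τ : List (Q × α) → Q → α → Q}
    (hσ : A.EveResolver σ) (hτ : A.AdamResolver τ) :
    ∃ ρ, A.IsSemRun w q0 ρ ∧ A.ConsEve σ w ρ ∧ A.ConsAdam τ w ρ := by
  obtain ⟨ρ, h0, hρ⟩ := exists_seq_of_history
    (fun h q a => if Odd (A.semPrio q a) then σ h q a else τ h q a) q0 w
  refine ⟨ρ, ⟨h0, fun i => ?_⟩, fun i hi => ?_, fun i hi => ?_⟩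
  · rw [hρ i]
    split_ifs with hi
    exacts [hσ _ _ _ hi, hτ _ _ _ (Nat.not_odd_iff_even.1 hi)]
  · rw [hρ i, if_pos hi]
    rfl
  · rw [hρ i, if_neg (Nat.not_odd_iff_even.2 hi)]
    rfl

variable (A) in
lemma ultSafeFrom_init_one (w : ℕ → α) : A.UltSafeFrom A.init 1 w :=
  ⟨0, A.init, A.init_layer, by simp [A.muHat_self A.init_layer], fun n => by
    simpa [SafeFin, A.muHat_self A.init_layer] using
      A.runList_isSome_of_layer_eq_one A.init_layer w n⟩

variable (A) in
lemma exists_max_ultSafeFrom (w : ℕ → α) :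
    ∃ X, A.UltSafeFrom A.init X w ∧ ∀ z, A.UltSafeFrom A.init z w → z ≤ X := by
  have hbdd : BddAbove {x | A.UltSafeFrom A.init x w} := by
    refine ⟨d, fun x ⟨_, p, hp, _⟩ => ?_⟩
    exact hp ▸ A.layer_le p
  exact ⟨_, Nat.sSup_mem ⟨1, A.ultSafeFrom_init_one w⟩ hbdd, fun z hz => le_csSup hbdd hz⟩

end Plays

section Winning

variable {A : Layered Q α d} [Finite Q]

theorem even_minInfOften_iff (hcons : A.Consistent) {q0 : Q} (hq0 : A.muHat 1 q0 = A.init)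
    {w : ℕ → α} {ρ : ℕ → Q} (hrun : A.IsSemRun w q0 ρ) {X : ℕ}
    (hX : A.UltSafeFrom A.init X w) (hmax : ∀ z, A.UltSafeFrom A.init z w → z ≤ X)
    (hθ : ∀ i, A.layerOf (ρ i) (w i) = minInfOften (A.runPrios w ρ) →
      ρ (i + 1) = A.lsResolver (history ρ w i) (ρ i) (w i)) :
    Even (minInfOften (A.runPrios w ρ)) ↔ Even X := by
  set y := minInfOften (A.runPrios w ρ)
  have hfreq : ∃ᶠ i in atTop, A.layerOf (ρ i) (w i) = y :=
    frequently_eq_minInfOften fun i => (A.layerOf_le _ _).trans (A.layer_le _)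
  have hy : 1 ≤ y := by
    obtain ⟨i, hi⟩ := hfreq.exists
    exact hi ▸ A.one_le_layerOf _ _
  obtain ⟨N, hN⟩ := (eventually_minInfOften_le.and hX.eventually).exists_forall_of_atTop
  obtain ⟨p, hp, hpr, hps⟩ := (hN N le_rfl).2
  have hyN : y ≤ A.layer (ρ N) := (hN N le_rfl).1.trans (A.layerOf_le _ _)
  have hρN : A.runList A.init (wordPrefix w N) = some (A.muHat 1 (ρ N)) := by
    simpa [hrun.1, hq0] using runList_muHat_segment hrun.2 le_rfl (N := 0) (k := N)
      fun i _ _ => A.one_le_layerOf (ρ i) (w i)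
  have h1 : A.muHat 1 (A.muHat y (ρ N)) = A.muHat 1 p := by
    rw [A.muHat_muHat le_rfl hy hyN]
    exact Option.some.inj (hρN.symm.trans hpr)
  have hiff := hcons.even_layer_iff h1
    (stronglySafe_muHat_of_liminf hrun.2 hy (fun i hi => (hN i hi).1) hfreq hθ)
    (stronglySafe_of_maximal hmax hp hpr hps)
  rwa [A.layer_muHat hy hyN, hp] at hiff

lemma parityAccept_of_consEve (hcons : A.Consistent) {q0 : Q} (hq0 : A.muHat 1 q0 = A.init)
    {w : ℕ → α} {X : ℕ} (hX : A.UltSafeFrom A.init X w)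
    (hmax : ∀ z, A.UltSafeFrom A.init z w → z ≤ X) (hXe : Even X) {ρ : ℕ → Q}
    (hrun : A.IsSemRun w q0 ρ) (hc : A.ConsEve A.lsResolver w ρ) :
    ParityAccept (A.runPrios w ρ) := by
  by_contra hodd
  have hodd' := Nat.not_even_iff_odd.1 hodd
  exact hodd ((even_minInfOften_iff hcons hq0 hrun hX hmax fun i hi =>
    hc i (by rwa [semPrio, hi])).2 hXe)

lemma even_of_consAdam (hcons : A.Consistent) {q0 : Q} (hq0 : A.muHat 1 q0 = A.init)
    {w : ℕ → α} {X : ℕ} (hX : A.UltSafeFrom A.init X w)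
    (hmax : ∀ z, A.UltSafeFrom A.init z w → z ≤ X) {ρ : ℕ → Q}
    (hrun : A.IsSemRun w q0 ρ) (hc : A.ConsAdam A.lsResolver w ρ)
    (hacc : ParityAccept (A.runPrios w ρ)) : Even X :=
  (even_minInfOften_iff hcons hq0 hrun hX hmax fun i hi =>
    hc i (by rw [semPrio, hi]; exact hacc)).1 hacc

lemma semAccept_iff_even (hcons : A.Consistent) {q0 : Q}
    (hq0 : A.muHat 1 q0 = A.init) {w : ℕ → α} {X : ℕ} (hX : A.UltSafeFrom A.init X w)
    (hmax : ∀ z, A.UltSafeFrom A.init z w → z ≤ X) : A.SemAccept q0 w ↔ Even X := by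
  constructor
  · rintro ⟨σ, hσ, hwin⟩
    obtain ⟨ρ, hρ, hE, hA⟩ := exists_play w q0 hσ A.lsResolver_adamResolver
    exact even_of_consAdam hcons hq0 hX hmax hρ hA (hwin ρ hρ hE)
  · exact fun hXe => ⟨A.lsResolver, A.lsResolver_eveResolver,
      fun ρ hρ hc => parityAccept_of_consEve hcons hq0 hX hmax hXe hρ hc⟩

end Winning

end Layered

theorem statement_2_general {Q α : Type} [Fintype Q] {d : ℕ}
    (A : Layered Q α d) (hcons : A.Consistent)
    (q0 : Q) (hq0' : A.muHat 1 q0 = A.init) :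
    ∃ σ τ : List (Q × α) → Q → α → Q, A.EveResolver σ ∧ A.AdamResolver τ ∧
      (∀ w : ℕ → α, A.SemAccept q0 w ↔
        (∀ ρ : ℕ → Q, A.IsSemRun w q0 ρ → A.ConsEve σ w ρ →
          ParityAccept (A.runPrios w ρ))) ∧
      (∀ w : ℕ → α, A.SemAccept q0 w ↔
        (∃ ρ : ℕ → Q, A.IsSemRun w q0 ρ ∧ A.ConsAdam τ w ρ ∧
          ParityAccept (A.runPrios w ρ))) ∧
      (∀ w : ℕ → α, A.SemAccept q0 w ↔
        (∀ ρ : ℕ → Q, A.IsSemRun w q0 ρ → A.ConsEve σ w ρ → A.ConsAdam τ w ρ →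
          ParityAccept (A.runPrios w ρ))) := by
  have hEve := A.lsResolver_eveResolver
  have hAdam := A.lsResolver_adamResolver
  refine ⟨A.lsResolver, A.lsResolver, hEve, hAdam, fun w => ?_, fun w => ?_, fun w => ?_⟩ <;>
  obtain ⟨X, hX, hmax⟩ := A.exists_max_ultSafeFrom w <;>
  obtain ⟨ρθ, hρθ, hθE, hθA⟩ := Layered.exists_play w q0 hEve hAdam <;>
  rw [Layered.semAccept_iff_even hcons hq0' hX hmax]
  · exact ⟨fun hXe ρ hρ hc => Layered.parityAccept_of_consEve hcons hq0' hX hmax hXe hρ hc,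
      fun hwin => Layered.even_of_consAdam hcons hq0' hX hmax hρθ hθA (hwin ρθ hρθ hθE)⟩
  · exact ⟨fun hXe =>
        ⟨ρθ, hρθ, hθA, Layered.parityAccept_of_consEve hcons hq0' hX hmax hXe hρθ hθE⟩,
      fun ⟨ρ, hρ, hc, hacc⟩ => Layered.even_of_consAdam hcons hq0' hX hmax hρ hc hacc⟩
  · exact ⟨fun hXe ρ hρ hc _ => Layered.parityAccept_of_consEve hcons hq0' hX hmax hXe hρ hc,
      fun hwin => Layered.even_of_consAdam hcons hq0' hX hmax hρθ hθA (hwin ρθ hρθ hθE hθA)⟩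

/-- For a consistent layered automaton `A`, the alternating parity
automaton `⟦A⟧` is history deterministic: there are resolvers `σ` for Eve and `τ` for
Adam with `L(⟦A⟧) = L(⟦A⟧,σ) = L(⟦A⟧,τ) = L(⟦A⟧,σ,τ)`. -/
theorem statement_2 {Q α : Type} [Fintype Q] [Fintype α] [Nonempty α] {d : ℕ} (hd : 1 ≤ d)
    (A : Layered Q α d) (hcons : A.Consistent)
    (q0 : Q) (hq0 : A.IsLeaf q0) (hq0' : A.muHat 1 q0 = A.init) :
    ∃ σ τ : List (Q × α) → Q → α → Q, A.EveResolver σ ∧ A.AdamResolver τ ∧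
      (∀ w : ℕ → α, A.SemAccept q0 w ↔
        (∀ ρ : ℕ → Q, A.IsSemRun w q0 ρ → A.ConsEve σ w ρ →
          ParityAccept (A.runPrios w ρ))) ∧
      (∀ w : ℕ → α, A.SemAccept q0 w ↔
        (∃ ρ : ℕ → Q, A.IsSemRun w q0 ρ ∧ A.ConsAdam τ w ρ ∧
          ParityAccept (A.runPrios w ρ))) ∧
      (∀ w : ℕ → α, A.SemAccept q0 w ↔
        (∀ ρ : ℕ → Q, A.IsSemRun w q0 ρ → A.ConsEve σ w ρ → A.ConsAdam τ w ρ →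
          ParityAccept (A.runPrios w ρ))) :=
  statement_2_general A hcons q0 hq0'
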